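/- arXiv:2110.08713 — 5 statements merged into one kernel-verified Lean document; each statement's English description precedes it below -/
import Mathlib

section
/- Let f_1, …, f_m ∈ ℝ^n, let Δ^m = {ω ∈ ℝ^m : ω_i ≥ 0 for all i, Σ_{i=1}^m ω_i = 1} be the probability simplex, and define J(v) = min_{i ∈ [m]} ⟨f_i, v⟩ − (1/2)‖v‖². If ω* ∈ Δ^m minimizes ‖Σ_{i=1}^m ω_i f_i‖ over Δ^m and v* ∈ ℝ^n maximizes J over ℝ^n, then v* = Σ_{i=1}^m ω*_i f_i (Lagrange duality for the MGD direction). -/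
/-!
Write `u = Σ ω*ᵢ fᵢ`; it is the minimum-norm point of the convex hull of the `fᵢ`, so the
variational inequality for that projection gives `‖u‖² ≤ ⟪fᵢ, u⟫` for every vertex `fᵢ`,
i.e. `J(u) ≥ ½‖u‖²`. On the other hand a minimum is at most any weighted mean, so
`J(v*) ≤ ⟪u, v*⟫ - ½‖v*‖²`. Optimality of `v*` chains the two into
`‖u‖² + ‖v*‖² ≤ 2⟪u, v*⟫`, i.e. `‖v* - u‖² ≤ 0`.
-/

open Finset

section InnerProductSpace

variable {F : Type*} [NormedAddCommGroup F] [InnerProductSpace ℝ F]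

theorem norm_sq_le_inner_of_isMinOn_norm {K : Set F} (hK : Convex ℝ K) {u w : F}
    (hu : u ∈ K) (hmin : IsMinOn (‖·‖) K u) (hw : w ∈ K) : ‖u‖ ^ 2 ≤ inner ℝ u w := by
  have : Nonempty K := ⟨⟨u, hu⟩⟩
  have hinf : ‖0 - u‖ = ⨅ x : K, ‖0 - (x : F)‖ := by
    simp only [zero_sub, norm_neg]
    exact le_antisymm (le_ciInf fun x => hmin x.2)
      (ciInf_le ⟨0, Set.forall_mem_range.2 fun x : K => norm_nonneg (x : F)⟩ ⟨u, hu⟩)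
  have hvar := (norm_eq_iInf_iff_real_inner_le_zero hK hu).1 hinf w hw
  rw [zero_sub, inner_neg_left, inner_sub_right, real_inner_self_eq_norm_sq] at hvar
  linarith

theorem eq_of_norm_sq_add_norm_sq_le_two_mul_inner {u v : F}
    (h : ‖u‖ ^ 2 + ‖v‖ ^ 2 ≤ 2 * inner ℝ u v) : u = v := by
  have hsq : ‖u - v‖ ^ 2 ≤ 0 := by
    rw [norm_sub_sq_real]
    linarith
  rw [← sub_eq_zero, ← norm_eq_zero]
  exact pow_eq_zero_iff two_ne_zero |>.1 (le_antisymm hsq (sq_nonneg _))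

end InnerProductSpace

theorem ciInf_le_sum_mul {ι : Type*} [Fintype ι] {ω : ι → ℝ} (h0 : ∀ i, 0 ≤ ω i)
    (h1 : ∑ i, ω i = 1) (g : ι → ℝ) : ⨅ i, g i ≤ ∑ i, ω i * g i :=
  calc ⨅ i, g i = ∑ i, ω i * ⨅ j, g j := by rw [← sum_mul, h1, one_mul]
    _ ≤ ∑ i, ω i * g i :=
      sum_le_sum fun i _ =>
        mul_le_mul_of_nonneg_left (ciInf_le (Finite.bddBelow_range g) i) (h0 i)

/-- Lagrange duality for the MGD direction: if `ω*` minimizes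
`‖Σ ωᵢ fᵢ‖` over the probability simplex and `v*` maximizes the MGD objective
`J(v) = min_i ⟪f i, v⟫ - (1/2)‖v‖²`, then `v* = Σ ω*ᵢ fᵢ`. -/
theorem stmt_1 {n m : ℕ} (hm : 0 < m) (f : Fin m → EuclideanSpace ℝ (Fin n))
    (ωstar : Fin m → ℝ) (hω0 : ∀ i, 0 ≤ ωstar i) (hω1 : ∑ i, ωstar i = 1)
    (hωmin : ∀ ω : Fin m → ℝ, (∀ i, 0 ≤ ω i) → ∑ i, ω i = 1 →
      ‖∑ i, ωstar i • f i‖ ≤ ‖∑ i, ω i • f i‖)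
    (vstar : EuclideanSpace ℝ (Fin n))
    (hmax : ∀ v : EuclideanSpace ℝ (Fin n),
      (⨅ i, (inner ℝ (f i) v : ℝ)) - (1 / 2) * ‖v‖ ^ 2 ≤
        (⨅ i, (inner ℝ (f i) vstar : ℝ)) - (1 / 2) * ‖vstar‖ ^ 2) :
    vstar = ∑ i, ωstar i • f i := by
  have : Nonempty (Fin m) := ⟨⟨0, hm⟩⟩
  set u := ∑ i, ωstar i • f i
  set K := Fintype.linearCombination ℝ f '' stdSimplex ℝ (Fin m)
  have hK : Convex ℝ K := (convex_stdSimplex ℝ _).linear_image _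
  have hu : u ∈ K := ⟨ωstar, ⟨hω0, hω1⟩, Fintype.linearCombination_apply _ _ _⟩
  have hmin : IsMinOn (‖·‖) K u := by
    rintro _ ⟨ω, ⟨h0, h1⟩, rfl⟩
    simpa [Fintype.linearCombination_apply] using hωmin ω h0 h1
  have hJu : ‖u‖ ^ 2 ≤ ⨅ i, (inner ℝ (f i) u : ℝ) := le_ciInf fun i => by
    rw [real_inner_comm]
    exact norm_sq_le_inner_of_isMinOn_norm hK hu hmin
      ⟨Pi.single i 1, single_mem_stdSimplex ℝ i, by simp⟩
  have hJv : ⨅ i, (inner ℝ (f i) vstar : ℝ) ≤ inner ℝ u vstar := by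
    simpa [u, sum_inner, real_inner_smul_left] using ciInf_le_sum_mul hω0 hω1 _
  refine (eq_of_norm_sq_add_norm_sq_le_two_mul_inner ?_).symm
  linarith [hmax u]
end

section
/- Let ℓ_1, …, ℓ_m : ℝ^n → ℝ be continuously differentiable and bounded below, with ℓ_i* = inf_{θ ∈ ℝ^n} ℓ_i(θ) > −∞ for each i. Define g(θ) = min_{ω ∈ Δ^m} ‖Σ_{i=1}^m ω_i ∇ℓ_i(θ)‖², where Δ^m is the probability simplex in ℝ^m. Let θ : [0, ∞) → ℝ^n be differentiable, let α : [0, ∞) → [0, ∞) be locally integrable, and suppose that for every s ∈ [0, t] and every i ∈ [m], (d/ds) ℓ_i(θ(s)) ≤ −α(s) g(θ(s)). Then (inf_{s ∈ [0,t]} g(θ(s))) · ∫_0^t α(s) ds ≤ min_{i ∈ [m]} (ℓ_i(θ(0)) − ℓ_i*). -/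
open Set MeasureTheory

/-! Each loss decreases at rate at least `α s · g(θ s) ≥ α s · G`, where `G` is the infimum of
`g ∘ θ` on `[0, t]`; integrating gives `G ∫₀ᵗ α ≤ ℓᵢ(θ 0) - ℓᵢ(θ t) ≤ ℓᵢ(θ 0) - ℓᵢ*` for every `i`. -/

lemma mul_integral_le_sub_of_deriv_le {f α : ℝ → ℝ} {a b c : ℝ} (hab : a ≤ b)
    (hf : ContinuousOn f (Icc a b)) (hfd : ∀ s ∈ Ioo a b, DifferentiableAt ℝ f s)
    (hα : IntervalIntegrable α volume a b) (hderiv : ∀ s ∈ Ioo a b, deriv f s ≤ -(c * α s)) :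
    c * ∫ s in a..b, α s ≤ f a - f b := by
  have hαIcc : IntegrableOn (fun s => -(c * α s)) (Icc a b) volume := by
    rw [integrableOn_Icc_iff_integrableOn_Ioc]
    exact ((intervalIntegrable_iff_integrableOn_Ioc_of_le hab).mp hα).const_mul c |>.neg
  have hdecr : f b - f a ≤ ∫ s in a..b, -(c * α s) :=
    intervalIntegral.sub_le_integral_of_hasDeriv_right_of_le hab hf
      (fun s hs => (hfd s hs).hasDerivAt.hasDerivWithinAt) hαIcc hderiv
  rw [intervalIntegral.integral_neg, intervalIntegral.integral_const_mul] at hdecr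
  linarith

/-- part (ii) of Theorem 2: along a trajectory with
`(d/ds) ℓᵢ(θ(s)) ≤ -α(s) g(θ(s))` on `[0,t]`, the best Pareto stationarity
measure satisfies `(inf_{s∈[0,t]} g(θ s)) ∫₀ᵗ α ≤ min_i (ℓᵢ(θ 0) - ℓᵢ*)`. -/
theorem stmt_5 {n m : ℕ} (hm : 0 < m)
    (ℓ : Fin m → EuclideanSpace ℝ (Fin n) → ℝ)
    (hC1 : ∀ i, ContDiff ℝ 1 (ℓ i))
    (hbdd : ∀ i, BddBelow (Set.range (ℓ i)))
    (g : EuclideanSpace ℝ (Fin n) → ℝ)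
    (hg : ∀ x, g x = sInf {r : ℝ | ∃ ω : Fin m → ℝ,
      (∀ i, 0 ≤ ω i) ∧ (∑ i, ω i = 1) ∧ r = ‖∑ i, ω i • gradient (ℓ i) x‖ ^ 2})
    (θ : ℝ → EuclideanSpace ℝ (Fin n)) (hθ : Differentiable ℝ θ)
    (α : ℝ → ℝ) (hα0 : ∀ s, 0 ≤ α s)
    (t : ℝ) (ht : 0 ≤ t)
    (hαint : IntervalIntegrable α MeasureTheory.volume 0 t)
    (hderiv : ∀ i, ∀ s ∈ Set.Icc (0 : ℝ) t,
      deriv (fun u => ℓ i (θ u)) s ≤ -(α s * g (θ s))) :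
    (⨅ s : Set.Icc (0 : ℝ) t, g (θ ↑s)) * (∫ s in (0 : ℝ)..t, α s) ≤
      ⨅ i, (ℓ i (θ 0) - ⨅ x, ℓ i x) := by
  have : Nonempty (Fin m) := Fin.pos_iff_nonempty.mp hm
  have hg0 : ∀ x, 0 ≤ g x := fun x =>
    hg x ▸ Real.sInf_nonneg fun _ ⟨_, _, _, hr⟩ => hr ▸ sq_nonneg _
  set G := ⨅ s : Icc (0 : ℝ) t, g (θ s)
  have hG : ∀ s ∈ Icc (0 : ℝ) t, G ≤ g (θ s) := fun s hs =>
    ciInf_le ⟨0, by rintro _ ⟨_, rfl⟩; exact hg0 _⟩ (⟨s, hs⟩ : Icc (0 : ℝ) t)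
  refine le_ciInf fun i => ?_
  have hfd : Differentiable ℝ fun u => ℓ i (θ u) :=
    ((hC1 i).differentiable one_ne_zero).comp hθ
  have hdecrease : G * ∫ s in (0 : ℝ)..t, α s ≤ ℓ i (θ 0) - ℓ i (θ t) :=
    mul_integral_le_sub_of_deriv_le ht hfd.continuous.continuousOn (fun s _ => hfd s) hαint
      fun s hs => by
        have := mul_le_mul_of_nonneg_left (hG s (Ioo_subset_Icc_self hs)) (hα0 s)
        linarith [hderiv i s (Ioo_subset_Icc_self hs)]
  linarith [ciInf_le (hbdd i) (θ t)]
end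

section
/- Let ℓ_1, …, ℓ_m : ℝ^n → ℝ be continuously differentiable and bounded below, with ℓ_i* = inf_{θ ∈ ℝ^n} ℓ_i(θ) > −∞. Define g(θ) = min_{ω ∈ Δ^m} ‖Σ_{i=1}^m ω_i ∇ℓ_i(θ)‖². Let θ : [0, ∞) → ℝ^n be differentiable and α : [0, ∞) → [0, ∞) locally integrable with ∫_0^t α(s) ds → ∞ as t → ∞, and suppose that for every s ≥ 0 and every i ∈ [m], (d/ds) ℓ_i(θ(s)) ≤ −α(s) g(θ(s)). Then for every ε > 0 there exists a finite time t_ε ≥ 0 with g(θ(t_ε)) ≤ ε; that is, the trajectory enters the set of Pareto ε-stationary points in finite time. -/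
/-! One objective suffices: along the trajectory `f = ℓᵢ ∘ θ` decreases at rate at least
`ε α(s)` while `g(θ(s)) > ε`, so `f t ≤ f 0 - ε ∫₀ᵗ α → -∞`, contradicting that `ℓᵢ` is
bounded below. -/

open Filter MeasureTheory Set

theorem sub_le_neg_mul_integral_of_deriv_le {f α : ℝ → ℝ} {a b c : ℝ} (hab : a ≤ b)
    (hf : Differentiable ℝ f) (hα : IntervalIntegrable α volume a b)
    (hderiv : ∀ s ∈ Ico a b, deriv f s ≤ -(c * α s)) :
    f b - f a ≤ -(c * ∫ s in a..b, α s) := by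
  have hint : IntegrableOn (fun s => -(c * α s)) (Icc a b) volume := by
    rw [integrableOn_Icc_iff_integrableOn_Ioc]
    exact ((hα.1.const_mul c).neg)
  calc f b - f a ≤ ∫ s in a..b, -(c * α s) :=
        intervalIntegral.sub_le_integral_of_hasDeriv_right_of_le hab hf.continuous.continuousOn
          (fun x _ => (hf x).hasDerivAt.hasDerivWithinAt) hint
          (fun x hx => hderiv x (Ioo_subset_Ico_self hx))
    _ = -(c * ∫ s in a..b, α s) := by
        rw [intervalIntegral.integral_neg, intervalIntegral.integral_const_mul]

theorem tendsto_atBot_of_deriv_le_neg_mul {f α : ℝ → ℝ} {c : ℝ} (hc : 0 < c)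
    (hf : Differentiable ℝ f) (hαint : ∀ t, IntervalIntegrable α volume 0 t)
    (hαdiv : Tendsto (fun t => ∫ s in (0 : ℝ)..t, α s) atTop atTop)
    (hderiv : ∀ s, 0 ≤ s → deriv f s ≤ -(c * α s)) :
    Tendsto f atTop atBot := by
  have hbound : ∀ᶠ t in atTop, f t ≤ f 0 + -(c * ∫ s in (0 : ℝ)..t, α s) := by
    filter_upwards [eventually_ge_atTop 0] with t ht
    have := sub_le_neg_mul_integral_of_deriv_le ht hf (hαint t)
      (fun s hs => hderiv s hs.1)
    linarith
  refine tendsto_atBot_mono' _ hbound (tendsto_atBot_add_const_left _ _ ?_)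
  exact tendsto_neg_atTop_atBot.comp (hαdiv.const_mul_atTop hc)

theorem stmt_6_general {n m : ℕ} (hm : 0 < m)
    (ℓ : Fin m → EuclideanSpace ℝ (Fin n) → ℝ)
    (hC1 : ∀ i, ContDiff ℝ 1 (ℓ i))
    (hbdd : ∀ i, BddBelow (Set.range (ℓ i)))
    (g : EuclideanSpace ℝ (Fin n) → ℝ)
    (θ : ℝ → EuclideanSpace ℝ (Fin n)) (hθ : Differentiable ℝ θ)
    (α : ℝ → ℝ) (hα0 : ∀ s, 0 ≤ α s)
    (hαint : ∀ t : ℝ, IntervalIntegrable α MeasureTheory.volume 0 t)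
    (hαdiv : Filter.Tendsto (fun t => ∫ s in (0 : ℝ)..t, α s)
      Filter.atTop Filter.atTop)
    (hderiv : ∀ i, ∀ s : ℝ, 0 ≤ s →
      deriv (fun u => ℓ i (θ u)) s ≤ -(α s * g (θ s))) :
    ∀ ε > (0 : ℝ), ∃ tε : ℝ, 0 ≤ tε ∧ g (θ tε) ≤ ε := by
  intro ε hε
  by_contra! hfar
  let i : Fin m := ⟨0, hm⟩
  have hdiff : Differentiable ℝ (ℓ i ∘ θ) :=
    ((hC1 i).differentiable one_ne_zero).comp hθ
  have hdecay : ∀ s, 0 ≤ s → deriv (ℓ i ∘ θ) s ≤ -(ε * α s) := fun s hs => by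
    have := mul_le_mul_of_nonneg_left (hfar s hs).le (hα0 s)
    have := hderiv i s hs
    simp only [Function.comp_def]
    linarith
  obtain ⟨c, hc⟩ := hbdd i
  have hdiverge := tendsto_atBot_of_deriv_le_neg_mul hε hdiff hαint hαdiv hdecay
  obtain ⟨t, ht⟩ := (hdiverge.eventually_lt_atBot c).exists
  exact ht.not_ge (hc ⟨θ t, rfl⟩)

/-- finite-entry part of Theorem 2: if `∫₀ᵗ α → ∞` and
`(d/ds) ℓᵢ(θ(s)) ≤ -α(s) g(θ(s))` for all `s ≥ 0`, then for every `ε > 0`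
the trajectory reaches a point with `g(θ(t_ε)) ≤ ε` in finite time. -/
theorem stmt_6 {n m : ℕ} (hm : 0 < m)
    (ℓ : Fin m → EuclideanSpace ℝ (Fin n) → ℝ)
    (hC1 : ∀ i, ContDiff ℝ 1 (ℓ i))
    (hbdd : ∀ i, BddBelow (Set.range (ℓ i)))
    (g : EuclideanSpace ℝ (Fin n) → ℝ)
    (hg : ∀ x, g x = sInf {r : ℝ | ∃ ω : Fin m → ℝ,
      (∀ i, 0 ≤ ω i) ∧ (∑ i, ω i = 1) ∧ r = ‖∑ i, ω i • gradient (ℓ i) x‖ ^ 2})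
    (θ : ℝ → EuclideanSpace ℝ (Fin n)) (hθ : Differentiable ℝ θ)
    (α : ℝ → ℝ) (hα0 : ∀ s, 0 ≤ α s)
    (hαint : ∀ t : ℝ, IntervalIntegrable α MeasureTheory.volume 0 t)
    (hαdiv : Filter.Tendsto (fun t => ∫ s in (0 : ℝ)..t, α s)
      Filter.atTop Filter.atTop)
    (hderiv : ∀ i, ∀ s : ℝ, 0 ≤ s →
      deriv (fun u => ℓ i (θ u)) s ≤ -(α s * g (θ s))) :
    ∀ ε > (0 : ℝ), ∃ tε : ℝ, 0 ≤ tε ∧ g (θ tε) ≤ ε :=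
  stmt_6_general hm ℓ hC1 hbdd g θ hθ α hα0 hαint hαdiv hderiv
end

section
/- Let ℓ = (ℓ_1, …, ℓ_m) : ℝ^n → ℝ^m and g : ℝ^n → ℝ be functions, let θ : [0, ∞) → ℝ^n be such that the maps s ↦ g(θ(s)) and s ↦ ℓ_i(θ(s)) are continuous, and let 0 ≤ ε̂ < ε. Assume the trajectory is Pareto non-worsening outside P_ε̂: for all 0 ≤ s ≤ t, if g(θ(u)) > ε̂ for every u ∈ [s, t], then ℓ_i(θ(t)) ≤ ℓ_i(θ(s)) for all i ∈ [m]. Suppose g(θ(t₀)) ≤ ε for some t₀ ≥ 0. Then for every t ≥ t₀ there exists s ∈ [t₀, t] with g(θ(s)) ≤ ε and ℓ_i(θ(t)) ≤ ℓ_i(θ(s)) for all i ∈ [m]; that is, θ(t) lies in the Pareto closure of P_ε (the set of points that Pareto dominate or match some point of P_ε = {θ : g(θ) ≤ ε}) restricted to points visited by the trajectory. -/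
/-- confinement part of Theorem 2: if the trajectory is Pareto
non-worsening whenever `g ∘ θ` stays above `ε̂` and `g(θ t₀) ≤ ε` with
`ε̂ < ε`, then for every `t ≥ t₀` the point `θ t` Pareto dominates or matches
some visited point `θ s` with `g(θ s) ≤ ε`. -/
theorem stmt_7 {n m : ℕ} (ℓ : Fin m → EuclideanSpace ℝ (Fin n) → ℝ)
    (g : EuclideanSpace ℝ (Fin n) → ℝ)
    (θ : ℝ → EuclideanSpace ℝ (Fin n))
    (hgcont : ContinuousOn (fun s => g (θ s)) (Set.Ici (0 : ℝ)))
    (hℓcont : ∀ i, ContinuousOn (fun s => ℓ i (θ s)) (Set.Ici (0 : ℝ)))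
    (εhat ε : ℝ) (hεhat : 0 ≤ εhat) (hεε : εhat < ε)
    (hmono : ∀ s t : ℝ, 0 ≤ s → s ≤ t →
      (∀ u ∈ Set.Icc s t, εhat < g (θ u)) → ∀ i, ℓ i (θ t) ≤ ℓ i (θ s))
    (t₀ : ℝ) (ht₀ : 0 ≤ t₀) (hg0 : g (θ t₀) ≤ ε) :
    ∀ t : ℝ, t₀ ≤ t → ∃ s ∈ Set.Icc t₀ t,
      g (θ s) ≤ ε ∧ ∀ i, ℓ i (θ t) ≤ ℓ i (θ s) := by
  intro t ht
  by_cases hA : ∃ u ∈ Set.Icc t₀ t, g (θ u) ≤ εhat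
  · -- let s be the sup of points in [t₀,t] where g ≤ ε̂
    set A : Set ℝ := {u ∈ Set.Icc t₀ t | g (θ u) ≤ εhat} with hAdef
    have hAne : A.Nonempty := by
      obtain ⟨u, hu1, hu2⟩ := hA; exact ⟨u, hu1, hu2⟩
    have hAsub : A ⊆ Set.Icc t₀ t := fun u hu => hu.1
    have hAbdd : BddAbove A := ⟨t, fun u hu => (hAsub hu).2⟩
    have hAclosed : IsClosed A := by
      have : A = Set.Icc t₀ t ∩ (fun s => g (θ s)) ⁻¹' Set.Iic εhat := by
        ext u; simp [hAdef, Set.mem_setOf_eq, and_assoc]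
      rw [this]
      have hsub : Set.Icc t₀ t ⊆ Set.Ici (0:ℝ) := fun u hu => le_trans ht₀ hu.1
      exact (hgcont.mono hsub).preimage_isClosed_of_isClosed isClosed_Icc isClosed_Iic
    have hsA : sSup A ∈ A := hAclosed.csSup_mem hAne hAbdd
    set s := sSup A with hs
    have hsIcc : s ∈ Set.Icc t₀ t := hAsub hsA
    refine ⟨s, hsIcc, le_trans hsA.2 hεε.le, ?_⟩
    intro i
    rcases eq_or_lt_of_le hsIcc.2 with heq | hlt
    · rw [heq]
    · -- for every s' ∈ (s, t], ℓ i (θ t) ≤ ℓ i (θ s')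
      have key : ∀ s' ∈ Set.Ioc s t, ℓ i (θ t) ≤ ℓ i (θ s') := by
        intro s' hs'
        refine hmono s' t (le_trans ht₀ (le_trans hsIcc.1 hs'.1.le)) hs'.2 ?_ i
        intro u hu
        by_contra hgu
        push_neg at hgu
        have huA : u ∈ A := ⟨⟨le_trans hsIcc.1 (le_trans hs'.1.le hu.1), hu.2⟩, hgu⟩
        have hle := le_csSup hAbdd huA
        rw [← hs] at hle
        exact absurd hle (not_le.mpr (lt_of_lt_of_le hs'.1 hu.1))
      -- pass to the limit s' → s⁺
      have hne : (nhdsWithin s (Set.Ioc s t)).NeBot := by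
        rw [← mem_closure_iff_nhdsWithin_neBot, closure_Ioc hlt.ne]
        exact ⟨le_refl s, hlt.le⟩
      have htend : Filter.Tendsto (fun s' => ℓ i (θ s')) (nhdsWithin s (Set.Ioc s t))
          (nhds (ℓ i (θ s))) := by
        have hcw : ContinuousWithinAt (fun s' => ℓ i (θ s')) (Set.Ici (0:ℝ)) s :=
          (hℓcont i) s (le_trans ht₀ hsIcc.1)
        exact hcw.mono (fun u hu => le_trans (le_trans ht₀ hsIcc.1) hu.1.le) |>.tendsto
      exact ge_of_tendsto htend (Filter.eventually_mem_set.mpr self_mem_nhdsWithin |>.mono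
        (fun s' hs' => key s' hs'))
  · push_neg at hA
    refine ⟨t₀, ⟨le_refl t₀, ht⟩, hg0, ?_⟩
    exact hmono t₀ t ht₀ ht (fun u hu => hA u hu)
end

section
/- Let F : ℝ^n → ℝ be differentiable and bounded below with F* = inf_θ F(θ) > −∞, let θ : [0, ∞) → ℝ^n be differentiable with s ↦ ‖θ'(s)‖² integrable on each [0, t], let α : [0, ∞) → [0, ∞) be measurable with B = sup_{s≥0} α(s) < ∞ and A = (∫_0^∞ α(s)^γ ds)^{1/γ} < ∞ for some γ ≥ 1, let g_ε ≥ 0, c ≥ 0, and suppose for all s ≥ 0: (d/ds) F(θ(s)) ≤ −‖θ'(s)‖² + α(s)(α(s) g_ε + c √g_ε). Then for every t > 0, inf_{s ∈ [0,t]} ‖θ'(s)‖² ≤ (F(θ(0)) − F*)/t + max(g_ε, c √g_ε) · (B + 1) · A · t^{−1/γ}. -/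
/-!
Integrating the dissipation inequality over `[0, t]` bounds `t · inf ‖θ'‖²` by `F (θ 0) - F*` plus
the integrated perturbation. Pointwise the perturbation is at most `(B + 1) · max gε (c √gε) · α`,
and Jensen's inequality for `x ↦ x ^ γ` on `[0, t]` (Hölder against `1`) gives
`∫₀ᵗ α ≤ t ^ (1 - 1/γ) · A`.
-/

open MeasureTheory Set

theorem integral_le_measureReal_univ_rpow_mul_integral_rpow {X : Type*} [MeasurableSpace X]
    {μ : Measure X} [IsFiniteMeasure μ] {f : X → ℝ} {p : ℝ} (hp : 1 ≤ p)
    (hf0 : ∀ x, 0 ≤ f x) (hf : Integrable f μ) (hfp : Integrable (fun x => f x ^ p) μ) :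
    ∫ x, f x ∂μ ≤ μ.real univ ^ (1 - 1 / p) * (∫ x, f x ^ p ∂μ) ^ (1 / p) := by
  rcases eq_zero_or_neZero μ with rfl | hμ
  · simp only [integral_zero_measure]
    positivity
  have hp0 : 0 < p := one_pos.trans_le hp
  set T := μ.real univ
  have hT : 0 < T := measureReal_univ_pos
  have jensen : (T⁻¹ * ∫ x, f x ∂μ) ^ p ≤ T⁻¹ * ∫ x, f x ^ p ∂μ := by
    simpa [average_eq, smul_eq_mul] using (convexOn_rpow hp).map_average_le
      (Real.continuous_rpow_const hp0.le).continuousOn isClosed_Ici (ae_of_all _ hf0) hf hfp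
  have hI : 0 ≤ ∫ x, f x ∂μ := integral_nonneg hf0
  have hJ : 0 ≤ ∫ x, f x ^ p ∂μ := integral_nonneg fun x => Real.rpow_nonneg (hf0 x) p
  calc ∫ x, f x ∂μ = T * (T⁻¹ * ∫ x, f x ∂μ) := by field_simp
    _ ≤ T * (T⁻¹ * ∫ x, f x ^ p ∂μ) ^ p⁻¹ := by
      gcongr
      exact (Real.le_rpow_inv_iff_of_pos (by positivity) (by positivity) hp0).2 jensen
    _ = T ^ (1 - 1 / p) * (∫ x, f x ^ p ∂μ) ^ (1 / p) := by
      rw [Real.mul_rpow (by positivity) hJ, Real.inv_rpow hT.le, Real.rpow_sub hT,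
        Real.rpow_one, one_div]
      field_simp

theorem intervalIntegral_le_rpow_mul_setIntegral_Ioi_rpow {f : ℝ → ℝ} {p t : ℝ} (hp : 1 ≤ p)
    (ht : 0 ≤ t) (hf0 : ∀ x, 0 ≤ f x) (hf : IntervalIntegrable f volume 0 t)
    (hfp : IntegrableOn (fun x => f x ^ p) (Ioi 0)) :
    ∫ x in 0..t, f x ≤ t ^ (1 - 1 / p) * (∫ x in Ioi 0, f x ^ p) ^ (1 / p) := by
  have hsub : Ioc 0 t ⊆ Ioi 0 := Ioc_subset_Ioi_self
  have hfp0 : ∀ x, 0 ≤ f x ^ p := fun x => Real.rpow_nonneg (hf0 x) p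
  rw [intervalIntegral.integral_of_le ht]
  calc ∫ x in Ioc 0 t, f x
      ≤ (volume.restrict (Ioc 0 t)).real univ ^ (1 - 1 / p) *
          (∫ x in Ioc 0 t, f x ^ p) ^ (1 / p) :=
        integral_le_measureReal_univ_rpow_mul_integral_rpow hp hf0 hf.1 (hfp.mono_set hsub)
    _ ≤ t ^ (1 - 1 / p) * (∫ x in Ioi 0, f x ^ p) ^ (1 / p) := by
      rw [measureReal_restrict_apply_univ, Real.volume_real_Ioc_of_le ht, sub_zero]
      gcongr
      · exact setIntegral_nonneg measurableSet_Ioc fun x _ => hfp0 x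
      · exact ae_of_all _ hfp0

theorem mul_mul_add_le_add_one_mul_max_mul {a B x y : ℝ} (ha : 0 ≤ a) (haB : a ≤ B)
    (hx : 0 ≤ x) : a * (a * x + y) ≤ (B + 1) * max x y * a := by
  have hax : a * x ≤ B * max x y :=
    mul_le_mul haB (le_max_left x y) hx (ha.trans haB)
  nlinarith [le_max_right x y]

theorem mul_iInf_le_intervalIntegral {f : ℝ → ℝ} {a b : ℝ} (hab : a ≤ b)
    (hbdd : BddBelow (range fun s : Icc a b => f s)) (hf : IntervalIntegrable f volume a b) :
    (b - a) * ⨅ s : Icc a b, f s ≤ ∫ x in a..b, f x := by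
  simpa [mul_comm] using intervalIntegral.integral_mono_on hab intervalIntegrable_const hf
    fun s hs => ciInf_le hbdd ⟨s, hs⟩

theorem intervalIntegrable_of_nonneg_of_le {f g : ℝ → ℝ} {a b : ℝ} (hab : a ≤ b)
    (hf : Measurable f) (hg : IntervalIntegrable g volume a b) (hf0 : ∀ x ∈ Icc a b, 0 ≤ f x)
    (hfg : ∀ x ∈ Icc a b, f x ≤ g x) : IntervalIntegrable f volume a b := by
  refine hg.mono_fun' hf.aestronglyMeasurable ?_
  filter_upwards [ae_restrict_mem measurableSet_uIoc] with x hx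
  have hx' : x ∈ Icc a b := Ioc_subset_Icc_self (uIoc_of_le hab ▸ hx)
  rw [Real.norm_of_nonneg (hf0 x hx')]
  exact hfg x hx'

theorem intervalIntegral_le_sub_add_of_deriv_le {φ v r : ℝ → ℝ} {a b : ℝ} (hab : a ≤ b)
    (hφ : Differentiable ℝ φ) (hv : IntervalIntegrable v volume a b)
    (hr : IntervalIntegrable r volume a b) (hderiv : ∀ s ∈ Ioo a b, deriv φ s ≤ -v s + r s) :
    ∫ s in a..b, v s ≤ φ a - φ b + ∫ s in a..b, r s := by
  have hint : IntegrableOn (fun s => -v s + r s) (Icc a b) := by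
    rw [integrableOn_Icc_iff_integrableOn_Ioc]
    exact (hv.neg.add hr).1
  have := intervalIntegral.sub_le_integral_of_hasDeriv_right_of_le hab hφ.continuous.continuousOn
    (fun s _ => (hφ s).hasDerivAt.hasDerivWithinAt) hint hderiv
  have hsplit := intervalIntegral.integral_add hv.neg hr
  simp only [Pi.neg_apply, intervalIntegral.integral_neg] at hsplit
  linarith

/-- summable-control case of Theorem 4: with
`A = (∫₀^∞ α^γ)^{1/γ} < ∞`, `α ≤ B` on `[0,∞)`, and
`(d/ds) F(θ(s)) ≤ -‖θ'(s)‖² + α(s)(α(s) g_ε + c √g_ε)` for all `s ≥ 0`,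
`inf_{s∈[0,t]} ‖θ'(s)‖² ≤ (F(θ 0) - F*)/t + max(g_ε, c√g_ε)(B+1) A t^{-1/γ}`. -/
theorem stmt_11 {n : ℕ} (F : EuclideanSpace ℝ (Fin n) → ℝ)
    (hFdiff : Differentiable ℝ F) (hFbdd : BddBelow (Set.range F))
    (θ : ℝ → EuclideanSpace ℝ (Fin n)) (hθ : Differentiable ℝ θ)
    (hvint : ∀ t : ℝ,
      IntervalIntegrable (fun s => ‖deriv θ s‖ ^ 2) MeasureTheory.volume 0 t)
    (α : ℝ → ℝ) (hαmeas : Measurable α) (hα0 : ∀ s, 0 ≤ α s)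
    (γ : ℝ) (hγ : 1 ≤ γ)
    (hαint : MeasureTheory.IntegrableOn (fun s => α s ^ γ) (Set.Ioi (0 : ℝ)))
    (A B gε c : ℝ) (hgε : 0 ≤ gε) (hc : 0 ≤ c)
    (hA : A = (∫ s in Set.Ioi (0 : ℝ), α s ^ γ) ^ (1 / γ))
    (hB : ∀ s : ℝ, 0 ≤ s → α s ≤ B)
    (hderiv : ∀ s : ℝ, 0 ≤ s →
      deriv (fun u => F (θ u)) s ≤
        -‖deriv θ s‖ ^ 2 + α s * (α s * gε + c * Real.sqrt gε))
    (t : ℝ) (ht : 0 < t) :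
    (⨅ s : Set.Icc (0 : ℝ) t, ‖deriv θ ↑s‖ ^ 2) ≤
      (F (θ 0) - ⨅ x, F x) / t +
        max gε (c * Real.sqrt gε) * (B + 1) * A * t ^ (-(1 / γ)) := by
  set M := max gε (c * Real.sqrt gε)
  set r : ℝ → ℝ := fun s => α s * (α s * gε + c * Real.sqrt gε)
  have hM : 0 ≤ (B + 1) * M :=
    mul_nonneg (by linarith [(hα0 0).trans (hB 0 le_rfl)]) (le_max_of_le_left hgε)
  have hr_le : ∀ s ∈ Icc 0 t, r s ≤ (B + 1) * M * α s :=
    fun s hs => mul_mul_add_le_add_one_mul_max_mul (hα0 s) (hB s hs.1) hgε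
  have hαI : IntervalIntegrable α volume 0 t := intervalIntegrable_of_nonneg_of_le ht.le hαmeas
    intervalIntegrable_const (fun s _ => hα0 s) fun s hs => hB s hs.1
  have hrI : IntervalIntegrable r volume 0 t := intervalIntegrable_of_nonneg_of_le ht.le
    (by fun_prop) (hαI.const_mul _) (fun s _ => have := hα0 s; by positivity) hr_le
  have henergy : ∫ s in 0..t, ‖deriv θ s‖ ^ 2 ≤ F (θ 0) - F (θ t) + ∫ s in 0..t, r s :=
    intervalIntegral_le_sub_add_of_deriv_le ht.le (hFdiff.comp hθ) (hvint t) hrI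
      fun s hs => hderiv s hs.1.le
  have hr_int : ∫ s in 0..t, r s ≤ (B + 1) * M * ∫ s in 0..t, α s := by
    rw [← intervalIntegral.integral_const_mul]
    exact intervalIntegral.integral_mono_on ht.le hrI (hαI.const_mul _) hr_le
  have hholder := intervalIntegral_le_rpow_mul_setIntegral_Ioi_rpow hγ ht.le hα0 hαI hαint
  rw [← hA, sub_eq_add_neg, Real.rpow_add ht, Real.rpow_one] at hholder
  have hinf := mul_iInf_le_intervalIntegral ht.le ⟨0, by rintro _ ⟨s, rfl⟩; positivity⟩ (hvint t)
  rw [sub_zero] at hinf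
  have hFinf : ⨅ x, F x ≤ F (θ t) := ciInf_le hFbdd _
  rw [← mul_le_mul_iff_of_pos_left ht, mul_add, mul_div_cancel₀ _ ht.ne']
  nlinarith [mul_le_mul_of_nonneg_left hholder hM]
end
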